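/- Let G be a finite simple graph with nonempty edge set, its edges listed in a fixed order e_1, …, e_n, with each e_j = {v_j, w_j} given a chosen source v_j and target w_j. Construct the p-graph F over observation space Y = V(G) and action space U = {emit_0, emit_1, emit_2} as follows: for each j, add action vertices i_j, s_j, t_j and observation vertices oi_j, os_j, ot_j; add edges i_j → oi_j labeled {emit_0}, s_j → os_j labeled {emit_1}, t_j → ot_j labeled {emit_2}; add edges oi_j → s_j labeled {v_j} and oi_j → t_j labeled {w_j}; for each j < n add edges os_j → i_{j+1} and ot_j → i_{j+1}, each labeled {v_j, w_j}; and let i_1 be the single initial state. Then G admits a proper 3-coloring if and only if there exist a set K with |K| ≤ 3 and an observation map h_y: V(G) → P(K)∖{∅} that is non-destructive on F. -/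

import Mathlib

/-! Formalization of interaction languages and procrustean graphs (p-graphs). -/

section InteractionLanguages

variable {U Y U' Y' : Type}

/-- A list of events (events are `U ⊕ Y`: actions on the left, observations on the
right) alternates kinds, the first element being an action iff `b = true`. -/
def AltFrom : Bool → List (U ⊕ Y) → Prop
  | _, [] => True
  | b, e :: s => e.isLeft = b ∧ AltFrom (!b) s

/-- A set of event sequences is prefix-closed. -/
def PrefixClosed (L : Set (List (U ⊕ Y))) : Prop :=
  ∀ s ∈ L, ∀ t : List (U ⊕ Y), t <+: s → t ∈ L

/-- An action-first language: all members alternate starting with an action,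
i.e. the language is a subset of (UY)*(U+ε). -/
def IsActionFirst (L : Set (List (U ⊕ Y))) : Prop := ∀ s ∈ L, AltFrom true s

/-- An observation-first language: subset of (YU)*(Y+ε). -/
def IsObservationFirst (L : Set (List (U ⊕ Y))) : Prop := ∀ s ∈ L, AltFrom false s

/-- An interaction language over the event space `U ⊕ Y`. -/
def IsInteractionLang (L : Set (List (U ⊕ Y))) : Prop :=
  PrefixClosed L ∧ (IsActionFirst L ∨ IsObservationFirst L)

/-- Two languages are akin when both are action-first or both are observation-first. -/
def Akin (LA LB : Set (List (U ⊕ Y))) : Prop :=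
  (IsActionFirst LA ∧ IsActionFirst LB) ∨ (IsObservationFirst LA ∧ IsObservationFirst LB)

/-- The last element of the sequence is an action. -/
def ActionTerminal (s : List (U ⊕ Y)) : Prop := ∃ u : U, s.getLast? = some (Sum.inl u)

/-- The last element of the sequence is an observation. -/
def ObservationTerminal (s : List (U ⊕ Y)) : Prop := ∃ y : Y, s.getLast? = some (Sum.inr y)

/-- `LA` is safe on `LB`. -/
def SafeLang (LA LB : Set (List (U ⊕ Y))) : Prop :=
  ∀ s ∈ LA ∩ LB,
    (ObservationTerminal s → ∀ e : U ⊕ Y, s ++ [e] ∈ LA → s ++ [e] ∈ LB) ∧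
    (ActionTerminal s → ∀ e : U ⊕ Y, s ++ [e] ∈ LB → s ++ [e] ∈ LA)

/-- `LA` is finite on `LB`: the lengths of joint sequences are bounded. -/
def FiniteOn (LA LB : Set (List (U ⊕ Y))) : Prop :=
  ∃ k : ℕ, ∀ s ∈ LA ∩ LB, s.length ≤ k

end InteractionLanguages

/-- A procrustean graph (p-graph) over action space `U` and observation space `Y`:
a finite edge-labeled bipartite directed graph; `label v w` is the set of events
labeling the edge from `v` to `w` (the empty set meaning there is no such edge). -/
structure PGraph (U Y : Type) where
  /-- The (finite) vertex type. -/
  V : Type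
  /-- The vertex set is finite. -/
  [finV : Fintype V]
  /-- `true` on action vertices, `false` on observation vertices. -/
  isAct : V → Bool
  /-- Edge labels. -/
  label : V → V → Set (U ⊕ Y)
  /-- Edges from action vertices are labeled by actions and lead to observation vertices. -/
  act_ok : ∀ v w : V, ∀ e ∈ label v w, isAct v = true → e.isLeft = true ∧ isAct w = false
  /-- Edges from observation vertices are labeled by observations and lead to action vertices. -/
  obs_ok : ∀ v w : V, ∀ e ∈ label v w, isAct v = false → e.isRight = true ∧ isAct w = true
  /-- The set of initial states. -/
  V0 : Set V
  V0_nonempty : V0.Nonempty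
  /-- Whether the initial states are action vertices. -/
  startAct : Bool
  /-- Initial states are exclusively action states or exclusively observation states. -/
  V0_uniform : ∀ v ∈ V0, isAct v = startAct

attribute [instance] PGraph.finV

namespace PGraph

variable {U Y U' Y' : Type}

/-- The event sequence `s` transitions in `G` from `v` to `w`. -/
inductive Trans (G : PGraph U Y) : G.V → List (U ⊕ Y) → G.V → Prop
  | nil (v : G.V) : Trans G v [] v
  | cons {v w x : G.V} {e : U ⊕ Y} {s : List (U ⊕ Y)} :
      e ∈ G.label v w → Trans G w s x → Trans G v (e :: s) x

/-- The induced language of a p-graph: the set of its executions. -/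
def lang (G : PGraph U Y) : Set (List (U ⊕ Y)) :=
  {s | ∃ v ∈ G.V0, ∃ w, G.Trans v s w}

/-- A vertex reached by some execution. -/
def Reached (G : PGraph U Y) (w : G.V) : Prop :=
  ∃ s : List (U ⊕ Y), ∃ v ∈ G.V0, G.Trans v s w

/-- A p-graph is in state-determined presentation: a unique initial state and,
at every vertex, labels of distinct outgoing edges pairwise disjoint. -/
def StateDetermined (G : PGraph U Y) : Prop :=
  (∃ v : G.V, G.V0 = {v}) ∧
  ∀ v w w' : G.V, w ≠ w' → G.label v w ∩ G.label v w' = ∅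

/-- A p-graph is single-outputting: every action vertex reached by some execution
has at most one outgoing edge, and that edge's label is a singleton (action) set. -/
def SingleOutputting (G : PGraph U Y) : Prop :=
  ∀ v : G.V, G.isAct v = true → G.Reached v →
    (∀ w w' : G.V, (G.label v w).Nonempty → (G.label v w').Nonempty → w = w') ∧
    (∀ w : G.V, (G.label v w).Nonempty → ∃ u : U, G.label v w = {Sum.inl u})

/-- A deterministic filter: every observation-terminal sequence of the induced
language has at most one successor in the language. -/
def DeterministicFilter (F : PGraph U Y) : Prop :=
  ∀ s ∈ F.lang, ObservationTerminal s →
    ∀ e e' : U ⊕ Y, s ++ [e] ∈ F.lang → s ++ [e'] ∈ F.lang → e = e'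

/-- `IsTrace G v s l`: starting at `v`, the event sequence `s` can be traced along
the sequence of vertices `l` (which begins with `v`). -/
inductive IsTrace (G : PGraph U Y) : G.V → List (U ⊕ Y) → List G.V → Prop
  | nil (v : G.V) : IsTrace G v [] [v]
  | cons {v w : G.V} {e : U ⊕ Y} {s : List (U ⊕ Y)} {l : List G.V} :
      e ∈ G.label v w → IsTrace G w s l → IsTrace G v (e :: s) (v :: l)

/-- A practicable filter: a single-outputting p-graph in which the validity of every
sequence of the induced language is the consequence of exactly one sequence of
state transitions. -/
def Practicable (F : PGraph U Y) : Prop :=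
  F.SingleOutputting ∧
  ∀ s ∈ F.lang, ∃! l : List F.V, ∃ v0 ∈ F.V0, F.IsTrace v0 s l

/-- `P` is safe on `W` (as p-graphs). -/
def SafeOn (P W : PGraph U Y) : Prop := SafeLang P.lang W.lang

/-- The event sequence `s` transitions in `P` from some initial state to some vertex
of the region `T`. -/
def ReachesVia (P : PGraph U Y) (T : Set P.V) (s : List (U ⊕ Y)) : Prop :=
  ∃ v0 ∈ P.V0, ∃ v ∈ T, P.Trans v0 s v

/-- The plan `(P, Pterm)` solves the planning problem `(W, Vgoal)`. -/
def Solves (P : PGraph U Y) (Pterm : Set P.V) (W : PGraph U Y) (Vgoal : Set W.V) : Prop :=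
  Akin P.lang W.lang ∧
  FiniteOn P.lang W.lang ∧
  SafeLang P.lang W.lang ∧
  (∀ s ∈ P.lang ∩ W.lang,
    ReachesVia P Pterm s ∨ ∃ t ∈ P.lang ∩ W.lang, s <+: t ∧ ReachesVia P Pterm t) ∧
  (∀ s ∈ P.lang ∩ W.lang, ReachesVia P Pterm s →
    ∀ w0 ∈ W.V0, ∀ w : W.V, W.Trans w0 s w → w ∈ Vgoal)

/-- The relation `R ⊆ V(P) × V(W)` relating `v` and `w` when some joint-execution
transitions in `P` from an initial state to `v` and in `W` from an initial state to `w`. -/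
def HomRel (P W : PGraph U Y) (v : P.V) (w : W.V) : Prop :=
  ∃ s ∈ P.lang ∩ W.lang, (∃ v0 ∈ P.V0, P.Trans v0 s v) ∧ (∃ w0 ∈ W.V0, W.Trans w0 s w)

/-- A homomorphic solution: a solution for which the relation `HomRel` is a function. -/
def HomomorphicSolution (P : PGraph U Y) (Pterm : Set P.V) (W : PGraph U Y)
    (Vgoal : Set W.V) : Prop :=
  Solves P Pterm W Vgoal ∧
  ∀ (v : P.V) (w w' : W.V), HomRel P W v w → HomRel P W v w' → w = w'

/-- The union `P ⊎ Q` of two p-graphs (whose initial states are of matching kind). -/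
def union (P Q : PGraph U Y) (h : P.startAct = Q.startAct) : PGraph U Y where
  V := P.V ⊕ Q.V
  isAct := Sum.elim P.isAct Q.isAct
  label := fun v w =>
    match v, w with
    | Sum.inl a, Sum.inl b => P.label a b
    | Sum.inr a, Sum.inr b => Q.label a b
    | _, _ => ∅
  act_ok := by
    rintro (a | a) (b | b) e he hv
    · exact P.act_ok a b e he hv
    · exact absurd he (Set.notMem_empty e)
    · exact absurd he (Set.notMem_empty e)
    · exact Q.act_ok a b e he hv
  obs_ok := by
    rintro (a | a) (b | b) e he hv
    · exact P.obs_ok a b e he hv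
    · exact absurd he (Set.notMem_empty e)
    · exact absurd he (Set.notMem_empty e)
    · exact Q.obs_ok a b e he hv
  V0 := Sum.inl '' P.V0 ∪ Sum.inr '' Q.V0
  V0_nonempty := by
    obtain ⟨v, hv⟩ := P.V0_nonempty
    exact ⟨Sum.inl v, Or.inl ⟨v, hv, rfl⟩⟩
  startAct := P.startAct
  V0_uniform := by
    rintro v (⟨a, ha, rfl⟩ | ⟨a, ha, rfl⟩)
    · exact P.V0_uniform a ha
    · exact (Q.V0_uniform a ha).trans h.symm

/-- The set of states reached in `P` from some initial state by the event sequence `s`. -/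
def reachSet (P : PGraph U Y) (s : List (U ⊕ Y)) : Set P.V :=
  {w | ∃ v0 ∈ P.V0, P.Trans v0 s w}

lemma trans_nil_eq {P : PGraph U Y} {v w : P.V} (h : P.Trans v [] w) : w = v := by
  cases h; rfl

lemma edge_flips {P : PGraph U Y} {v w : P.V} {e : U ⊕ Y} (he : e ∈ P.label v w) :
    P.isAct w = !P.isAct v := by
  cases hv : P.isAct v
  · simpa using (P.obs_ok v w e he hv).2
  · simpa using (P.act_ok v w e he hv).2

lemma trans_parity {P : PGraph U Y} {v w : P.V} {s : List (U ⊕ Y)}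
    (h : P.Trans v s w) : P.isAct w = Bool.xor (P.isAct v) (decide (s.length % 2 = 1)) := by
  induction h with
  | nil v => simp
  | cons he _ ih =>
    rename_i v' w' x' e s' _
    rw [ih, edge_flips he]
    rcases Nat.even_or_odd s'.length with hp | hp <;>
      rcases hb : P.isAct v' <;>
      simp_all [Nat.even_iff, Nat.odd_iff, List.length_cons, Nat.succ_mod_two_eq_one_iff,
        Nat.succ_mod_two_eq_zero_iff]
  
lemma reachSet_homog {P : PGraph U Y} {s : List (U ⊕ Y)} {v w : P.V}
    (hv : v ∈ P.reachSet s) (hw : w ∈ P.reachSet s) : P.isAct v = P.isAct w := by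
  obtain ⟨v0, hv0, hv⟩ := hv
  obtain ⟨w0, hw0, hw⟩ := hw
  rw [trans_parity hv, trans_parity hw, P.V0_uniform v0 hv0, P.V0_uniform w0 hw0]

lemma trans_append {P : PGraph U Y} {v x : P.V} {s t : List (U ⊕ Y)}
    (h : P.Trans v (s ++ t) x) : ∃ m : P.V, P.Trans v s m ∧ P.Trans m t x := by
  induction s generalizing v with
  | nil => exact ⟨v, Trans.nil v, h⟩
  | cons e s ih =>
    cases h with
    | cons he h' =>
      obtain ⟨m, h1, h2⟩ := ih h'
      exact ⟨m, Trans.cons he h1, h2⟩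

lemma trans_single {P : PGraph U Y} {v x : P.V} {e : U ⊕ Y}
    (h : P.Trans v [e] x) : e ∈ P.label v x := by
  cases h with
  | cons he h' =>
    rw [trans_nil_eq h']
    exact he

/-- The powerset determinization of a p-graph `P`: vertices are the subsets of
`V(P)` of the form `S(s) = reachSet P s` for `s ∈ L(P)`, the single initial state is
`S(ε) = V0(P)`, and the label of the edge from `S` to `T` contains `e` exactly when
`S = S(s)`, `T = S(s·e)` for some `s` with `s, s·e ∈ L(P)`. -/
noncomputable def determinize (P : PGraph U Y) : PGraph U Y where
  V := {S : Set P.V // ∃ s ∈ P.lang, P.reachSet s = S}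
  finV := Fintype.ofFinite _
  isAct := fun S => by classical exact decide (∃ v ∈ S.1, P.isAct v = true)
  label := fun S T =>
    {e | ∃ s ∈ P.lang, P.reachSet s = S.1 ∧ s ++ [e] ∈ P.lang ∧ P.reachSet (s ++ [e]) = T.1}
  act_ok := by
    classical
    rintro S T e ⟨s, hs, hS, hse, hT⟩ hv
    rw [decide_eq_true_iff] at hv
    obtain ⟨v, hvS, hvAct⟩ := hv
    obtain ⟨v0, hv0, x, hx⟩ := hse
    obtain ⟨m, hm, hmx⟩ := trans_append hx
    have hmS : m ∈ P.reachSet s := ⟨v0, hv0, hm⟩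
    have hedge : e ∈ P.label m x := trans_single hmx
    have hmAct : P.isAct m = true := by
      rw [← hS] at hvS
      rw [reachSet_homog hmS hvS, hvAct]
    obtain ⟨hL, hxA⟩ := P.act_ok m x e hedge hmAct
    refine ⟨hL, ?_⟩
    rw [decide_eq_false_iff_not]
    rintro ⟨w, hwT, hwAct⟩
    rw [← hT] at hwT
    have hxT : x ∈ P.reachSet (s ++ [e]) := ⟨v0, hv0, hx⟩
    rw [reachSet_homog hwT hxT, hxA] at hwAct
    exact Bool.false_ne_true hwAct
  obs_ok := by
    classical
    rintro S T e ⟨s, hs, hS, hse, hT⟩ hv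
    rw [decide_eq_false_iff_not] at hv
    obtain ⟨v0, hv0, x, hx⟩ := hse
    obtain ⟨m, hm, hmx⟩ := trans_append hx
    have hmS : m ∈ P.reachSet s := ⟨v0, hv0, hm⟩
    have hedge : e ∈ P.label m x := trans_single hmx
    have hmObs : P.isAct m = false := by
      rcases hma : P.isAct m with _ | _
      · rfl
      · exact absurd ⟨m, by rwa [hS] at hmS, hma⟩ hv
    obtain ⟨hR, hxA⟩ := P.obs_ok m x e hedge hmObs
    refine ⟨hR, ?_⟩
    rw [decide_eq_true_iff]
    refine ⟨x, ?_, hxA⟩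
    rw [← hT]
    exact ⟨v0, hv0, hx⟩
  V0 := {⟨P.reachSet [],
    ⟨[], ⟨P.V0_nonempty.choose, P.V0_nonempty.choose_spec,
      P.V0_nonempty.choose, Trans.nil _⟩, rfl⟩⟩}
  V0_nonempty := ⟨_, rfl⟩
  startAct := P.startAct
  V0_uniform := by
    classical
    rintro S hS
    rw [Set.mem_singleton_iff] at hS
    subst hS
    rcases hsa : P.startAct with _ | _
    · rw [decide_eq_false_iff_not]
      rintro ⟨v, ⟨v0, hv0, hv⟩, hvAct⟩
      rw [trans_nil_eq hv] at hvAct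
      rw [P.V0_uniform v0 hv0, hsa] at hvAct
      exact Bool.false_ne_true hvAct
    · rw [decide_eq_true_iff]
      obtain ⟨v, hv⟩ := P.V0_nonempty
      exact ⟨v, ⟨v, hv, Trans.nil v⟩, by rw [P.V0_uniform v hv, hsa]⟩

end PGraph
section Maps

variable {U Y U' Y' : Type}

/-- A label map: an action map together with an observation map, each assigning a
nonempty set of new events to each event. -/
structure LabelMap (U Y U' Y' : Type) where
  actMap : U → Set U'
  obsMap : Y → Set Y'
  actMap_nonempty : ∀ u : U, (actMap u).Nonempty
  obsMap_nonempty : ∀ y : Y, (obsMap y).Nonempty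

/-- Action of a label map on a single event. -/
def LabelMap.event (h : LabelMap U Y U' Y') : U ⊕ Y → Set (U' ⊕ Y')
  | Sum.inl u => Sum.inl '' h.actMap u
  | Sum.inr y => Sum.inr '' h.obsMap y

/-- Extension of a label map to sets of events: `h(S) = ⋃_{e ∈ S} h(e)`. -/
def LabelMap.setImage (h : LabelMap U Y U' Y') (S : Set (U ⊕ Y)) : Set (U' ⊕ Y') :=
  ⋃ e ∈ S, h.event e

/-- Extension of a label map to p-graphs: replace each edge label `S` with `h(S)`. -/
def PGraph.applyMap (h : LabelMap U Y U' Y') (G : PGraph U Y) : PGraph U' Y' where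
  V := G.V
  isAct := G.isAct
  label := fun v w => h.setImage (G.label v w)
  act_ok := by
    intro v w e' he' hv
    simp only [LabelMap.setImage, Set.mem_iUnion, exists_prop] at he'
    obtain ⟨e, he, hmem⟩ := he'
    have h1 := G.act_ok v w e he hv
    refine ⟨?_, h1.2⟩
    cases e with
    | inl u =>
      simp only [LabelMap.event] at hmem
      obtain ⟨u', _, rfl⟩ := hmem
      rfl
    | inr y => simp at h1
  obs_ok := by
    intro v w e' he' hv
    simp only [LabelMap.setImage, Set.mem_iUnion, exists_prop] at he'
    obtain ⟨e, he, hmem⟩ := he'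
    have h1 := G.obs_ok v w e he hv
    refine ⟨?_, h1.2⟩
    cases e with
    | inl u => simp at h1
    | inr y =>
      simp only [LabelMap.event] at hmem
      obtain ⟨y', _, rfl⟩ := hmem
      rfl
  V0 := G.V0
  V0_nonempty := G.V0_nonempty
  startAct := G.startAct
  V0_uniform := G.V0_uniform

/-- Action of an observation map on a single event (actions are left unchanged). -/
def obsEventImage (h : Y → Set Y') : U ⊕ Y → Set (U ⊕ Y')
  | Sum.inl u => {Sum.inl u}
  | Sum.inr y => Sum.inr '' h y

/-- `h_y(F)`: the p-graph `F` with each observation edge label `S` replaced by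
`⋃_{y ∈ S} h_y(y)` (action labels unchanged). -/
def PGraph.mapObs (G : PGraph U Y) (h : Y → Set Y') : PGraph U Y' where
  V := G.V
  isAct := G.isAct
  label := fun v w => ⋃ e ∈ G.label v w, obsEventImage h e
  act_ok := by
    intro v w e' he' hv
    simp only [Set.mem_iUnion, exists_prop] at he'
    obtain ⟨e, he, hmem⟩ := he'
    have h1 := G.act_ok v w e he hv
    refine ⟨?_, h1.2⟩
    cases e with
    | inl u =>
      simp only [obsEventImage, Set.mem_singleton_iff] at hmem
      subst hmem
      rfl
    | inr y => simp at h1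
  obs_ok := by
    intro v w e' he' hv
    simp only [Set.mem_iUnion, exists_prop] at he'
    obtain ⟨e, he, hmem⟩ := he'
    have h1 := G.obs_ok v w e he hv
    refine ⟨?_, h1.2⟩
    cases e with
    | inl u => simp at h1
    | inr y =>
      simp only [obsEventImage] at hmem
      obtain ⟨y', _, rfl⟩ := hmem
      rfl
  V0 := G.V0
  V0_nonempty := G.V0_nonempty
  startAct := G.startAct
  V0_uniform := G.V0_uniform

/-- `corrEvent h e f` holds when `f ∈ h_y(e)` for observations and `f = e` for actions. -/
def corrEvent (h : Y → Set Y') : U ⊕ Y → U ⊕ Y' → Prop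
  | Sum.inl u, Sum.inl u' => u' = u
  | Sum.inr y, Sum.inr y' => y' ∈ h y
  | _, _ => False

/-- `F` is equivalent to `F'` modulo the observation map `h`. -/
def EquivMod (F : PGraph U Y) (F' : PGraph U Y') (h : Y → Set Y') : Prop :=
  ∀ s ∈ F.lang, ObservationTerminal s →
    {u : U | s ++ [Sum.inl u] ∈ F.lang} =
      {u : U | ∃ t : List (U ⊕ Y'),
        List.Forall₂ (corrEvent h) s t ∧ t ++ [Sum.inl u] ∈ F'.lang}

/-- The observation map `h` is non-destructive on `F`. -/
def ObsNonDestructive (F : PGraph U Y) (h : Y → Set Y') : Prop :=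
  EquivMod F (F.mapObs h) h

end Maps
/-! ### The hardness construction: a filter built from a listing of graph edges -/

/-- Tags for the six vertices associated to each graph edge in the hardness
construction: action vertices `i_j`, `s_j`, `t_j` and observation vertices
`oi_j`, `os_j`, `ot_j`. -/
inductive HTag : Type
  | ti : HTag
  | ts : HTag
  | tt : HTag
  | toi : HTag
  | tos : HTag
  | tot : HTag
deriving DecidableEq

instance : Fintype HTag :=
  ⟨{HTag.ti, HTag.ts, HTag.tt, HTag.toi, HTag.tos, HTag.tot}, by intro x; cases x <;> simp⟩

/-- `i`, `s`, `t` are action vertices; `oi`, `os`, `ot` are observation vertices. -/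
def HTag.isAction : HTag → Bool
  | .ti => true
  | .ts => true
  | .tt => true
  | .toi => false
  | .tos => false
  | .tot => false

variable {Vt : Type}

/-- The edge labels of the hardness construction.  The action space is
`Fin 3 = {emit_0, emit_1, emit_2}` and the observation space is the vertex set `Vt`
of the graph being colored.  `src j`/`tgt j` are the chosen source and target of the
`j`-th graph edge. -/
def hardLabel (n : ℕ) (src tgt : Fin n → Vt) :
    Fin n × HTag → Fin n × HTag → Set (Fin 3 ⊕ Vt) := fun p q =>
  match p, q with
  | (j, HTag.ti), (k, HTag.toi) => if k = j then {Sum.inl 0} else ∅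
  | (j, HTag.ts), (k, HTag.tos) => if k = j then {Sum.inl 1} else ∅
  | (j, HTag.tt), (k, HTag.tot) => if k = j then {Sum.inl 2} else ∅
  | (j, HTag.toi), (k, HTag.ts) => if k = j then {Sum.inr (src j)} else ∅
  | (j, HTag.toi), (k, HTag.tt) => if k = j then {Sum.inr (tgt j)} else ∅
  | (j, HTag.tos), (k, HTag.ti) =>
      if (k : ℕ) = (j : ℕ) + 1 then {Sum.inr (src j), Sum.inr (tgt j)} else ∅
  | (j, HTag.tot), (k, HTag.ti) =>
      if (k : ℕ) = (j : ℕ) + 1 then {Sum.inr (src j), Sum.inr (tgt j)} else ∅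
  | _, _ => ∅

/-- The p-graph (a filter) built from the listing `e_j = {src j, tgt j}`,
`j = 1, …, n`, of the edges of a graph, with single initial state `i_1`. -/
def hardPGraph (n : ℕ) (hn : 0 < n) (src tgt : Fin n → Vt) : PGraph (Fin 3) Vt where
  V := Fin n × HTag
  isAct := fun p => p.2.isAction
  label := hardLabel n src tgt
  act_ok := by
    rintro ⟨j, a⟩ ⟨k, b⟩ e he hv
    cases a <;> cases b <;>
      simp only [hardLabel, HTag.isAction] at he hv ⊢ <;>
      first
        | exact absurd hv Bool.false_ne_true
        | exact absurd he (Set.notMem_empty e)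
        | (split at he <;>
            first
              | exact absurd he (Set.notMem_empty e)
              | (simp only [Set.mem_singleton_iff, Set.mem_insert_iff] at he
                 first
                   | (subst he; exact ⟨rfl, True.intro⟩)
                   | (rcases he with rfl | rfl <;> exact ⟨rfl, True.intro⟩)))
  obs_ok := by
    rintro ⟨j, a⟩ ⟨k, b⟩ e he hv
    cases a <;> cases b <;>
      simp only [hardLabel, HTag.isAction] at he hv ⊢ <;>
      first
        | exact absurd hv.symm Bool.false_ne_true
        | exact absurd he (Set.notMem_empty e)
        | (split at he <;>
            first
              | exact absurd he (Set.notMem_empty e)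
              | (simp only [Set.mem_singleton_iff, Set.mem_insert_iff] at he
                 first
                   | (subst he; exact ⟨rfl, True.intro⟩)
                   | (rcases he with rfl | rfl <;> exact ⟨rfl, True.intro⟩)))
  V0 := {(⟨0, hn⟩, HTag.ti)}
  V0_nonempty := ⟨_, rfl⟩
  startAct := true
  V0_uniform := by
    rintro v hv
    rw [Set.mem_singleton_iff] at hv
    subst hv
    rfl


/-! A proper coloring `c` gives the singleton map `y ↦ {c y}`, which turns the construction into
the same construction over the colors; since the two endpoints of every edge get different
colors, that filter is still deterministic, so every history of the image has a unique
preimage, which ends in the same single state and therefore admits the same actions.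
Conversely, if some `k` lay in `h(v_j) ∩ h(w_j)`, the image could pass through `t_j` after the
history `… emit_0 v_j`, which in the original leads to `s_j` only; so `emit_2` would be admitted
in the image but not in the original. Hence `h` separates the endpoints of every edge, and a
choice `h(y) → K ↪ Fin 3` is a proper coloring. -/

namespace PGraph

variable {U Y Y' : Type}

theorem Trans.append {G : PGraph U Y} {v w x : G.V} {s t : List (U ⊕ Y)}
    (h₁ : G.Trans v s w) (h₂ : G.Trans w t x) : G.Trans v (s ++ t) x := by
  induction h₁ with
  | nil => exact h₂
  | cons he _ ih => exact .cons he (ih h₂)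

theorem Trans.eq_of_stateDetermined {G : PGraph U Y} (hG : G.StateDetermined)
    {v w w' : G.V} {s : List (U ⊕ Y)} (h₁ : G.Trans v s w) (h₂ : G.Trans v s w') :
    w = w' := by
  induction h₁ with
  | nil => exact (trans_nil_eq h₂).symm
  | @cons v m _ e s he₁ _ ih =>
    obtain _ | @⟨_, m', _, _, _, he₂, h₂⟩ := h₂
    obtain rfl : m = m' := by
      by_contra hne
      exact (hG.2 v m m' hne).subset ⟨he₁, he₂⟩
    exact ih h₂

theorem StateDetermined.reach_unique {G : PGraph U Y} (hG : G.StateDetermined)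
    {v v' w w' : G.V} {s : List (U ⊕ Y)} (hv : v ∈ G.V0) (hv' : v' ∈ G.V0)
    (h₁ : G.Trans v s w) (h₂ : G.Trans v' s w') : w = w' := by
  obtain ⟨v₀, hV0⟩ := hG.1
  rw [hV0] at hv hv'
  rw [hv, ← hv'] at h₁
  exact h₁.eq_of_stateDetermined hG h₂

theorem inl_mem_mapObs_label {G : PGraph U Y} {h : Y → Set Y'} {v w : G.V} {u : U} :
    Sum.inl u ∈ (G.mapObs h).label v w ↔ Sum.inl u ∈ G.label v w := by
  simp [mapObs, obsEventImage]

theorem inr_mem_mapObs_label {G : PGraph U Y} {h : Y → Set Y'} {v w : G.V} {y : Y} {k : Y'}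
    (hy : Sum.inr y ∈ G.label v w) (hk : k ∈ h y) : Sum.inr k ∈ (G.mapObs h).label v w :=
  Set.mem_biUnion hy ⟨k, hk, rfl⟩

theorem Trans.mapObs {G : PGraph U Y} {h : Y → Set Y'} {c : Y → Y'} (hc : ∀ y, c y ∈ h y)
    {v w : G.V} {s : List (U ⊕ Y)} (hs : G.Trans v s w) :
    (G.mapObs h).Trans v (s.map (Sum.map id c)) w := by
  induction hs with
  | nil v => exact .nil (G := G.mapObs h) v
  | @cons _ _ _ e _ he _ ih =>
    refine .cons ?_ ih
    cases e with
    | inl u => exact inl_mem_mapObs_label.mpr he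
    | inr y => exact inr_mem_mapObs_label he (hc y)

end PGraph

section CorrEvent

variable {U Y Y' : Type}

theorem forall₂_corrEvent_map {h : Y → Set Y'} {c : Y → Y'} (hc : ∀ y, c y ∈ h y)
    (s : List (U ⊕ Y)) : List.Forall₂ (corrEvent h) s (s.map (Sum.map id c)) := by
  induction s with
  | nil => exact .nil
  | cons e s ih => cases e <;> exact .cons (by simp [corrEvent, hc]) ih

theorem forall₂_corrEvent_singleton_iff {c : Y → Y'} {s : List (U ⊕ Y)}
    {t : List (U ⊕ Y')} :
    List.Forall₂ (corrEvent fun y => ({c y} : Set Y')) s t ↔ t = s.map (Sum.map id c) := by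
  constructor
  · intro hst
    induction hst with
    | nil => rfl
    | @cons e f s t hef _ ih =>
      cases e <;> cases f <;> simp only [corrEvent, Set.mem_singleton_iff] at hef <;>
        simp [hef, ih]
  · rintro rfl
    exact forall₂_corrEvent_map (fun y => Set.mem_singleton (c y)) s

end CorrEvent

open PGraph in
theorem obsNonDestructive_singleton_of_stateDetermined {U Y Y' : Type} {G : PGraph U Y}
    (c : Y → Y') (hG : (G.mapObs fun y => {c y}).StateDetermined) :
    ObsNonDestructive G fun y => {c y} := by
  rintro s ⟨v₀, hv₀, w, hs⟩ -
  ext u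
  simp only [Set.mem_ofPred_eq, forall₂_corrEvent_singleton_iff, exists_eq_left]
  constructor
  · rintro ⟨v, hv, x, hsu⟩
    refine ⟨v, hv, x, ?_⟩
    simpa using hsu.mapObs fun y => Set.mem_singleton (c y)
  · rintro ⟨v, hv, x, hsu⟩
    obtain ⟨m, hm, hmx⟩ := trans_append hsu
    have hmw : m = w := hG.reach_unique hv hv₀ hm (hs.mapObs fun y => Set.mem_singleton (c y))
    subst hmw
    exact ⟨v₀, hv₀, x,
      hs.append (.cons (inl_mem_mapObs_label.mp (trans_single hmx)) (.nil (G := G) x))⟩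

section Construction

open PGraph

variable {Vt Vt' : Type} {n : ℕ} {src tgt : Fin n → Vt}

theorem hardLabel_disjoint (hst : ∀ j, src j ≠ tgt j) (v : Fin n × HTag) {w w' : Fin n × HTag}
    (hww' : w ≠ w') : hardLabel n src tgt v w ∩ hardLabel n src tgt v w' = ∅ := by
  obtain ⟨j, a⟩ := v
  obtain ⟨k, b⟩ := w
  obtain ⟨k', b'⟩ := w'
  have := hst j
  cases a <;> cases b <;> cases b' <;> simp only [hardLabel] <;> (try split_ifs) <;>
    simp_all [Fin.ext_iff]

theorem hardPGraph_stateDetermined (hn : 0 < n) (hst : ∀ j, src j ≠ tgt j) :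
    (hardPGraph n hn src tgt).StateDetermined :=
  ⟨⟨_, rfl⟩, fun v _ _ => hardLabel_disjoint hst v⟩

theorem hardPGraph_mapObs_singleton (hn : 0 < n) (c : Vt → Vt') :
    ((hardPGraph n hn src tgt).mapObs fun y => {c y}) =
      hardPGraph n hn (c ∘ src) (c ∘ tgt) := by
  simp only [PGraph.mapObs, hardPGraph]
  congr 1
  funext ⟨j, a⟩ ⟨k, b⟩
  cases a <;> cases b <;> simp only [hardLabel] <;> (try split_ifs) <;> ext e <;>
    simp [obsEventImage, or_comm]

theorem hardPGraph_trans_ti (hn : 0 < n) (j : Fin n) :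
    ∃ s, (hardPGraph n hn src tgt).Trans (⟨0, hn⟩, HTag.ti) s (j, HTag.ti) := by
  obtain ⟨m, hm⟩ := j
  induction m with
  | zero => exact ⟨[], .nil _⟩
  | succ m ih =>
    obtain ⟨s, hs⟩ := ih (by omega)
    set j : Fin n := ⟨m, by omega⟩ with hj
    refine ⟨s ++ [.inl 0, .inr (src j), .inl 1, .inr (src j)], hs.append ?_⟩
    exact .cons (w := (j, .toi)) (by simp [hardPGraph, hardLabel]) <|
      .cons (w := (j, .ts)) (by simp [hardPGraph, hardLabel]) <|
      .cons (w := (j, .tos)) (by simp [hardPGraph, hardLabel]) <|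
      .cons (by simp [hardPGraph, hardLabel, hj]) (.nil _)

theorem disjoint_of_obsNonDestructive_hardPGraph {K : Type} (hn : 0 < n)
    (hst : ∀ j, src j ≠ tgt j) {h : Vt → Set K} (hne : ∀ y, (h y).Nonempty)
    (hnd : ObsNonDestructive (hardPGraph n hn src tgt) h) (j : Fin n) :
    Disjoint (h (src j)) (h (tgt j)) := by
  set F := hardPGraph n hn src tgt
  choose d hd using hne
  obtain ⟨s, hs⟩ := hardPGraph_trans_ti (src := src) (tgt := tgt) hn j
  rw [Set.disjoint_left]
  intro k hks hkt
  have hsj : F.Trans (⟨0, hn⟩, HTag.ti) (s ++ [.inl 0, .inr (src j)]) (j, HTag.ts) :=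
    hs.append <| .cons (w := (j, .toi)) (by simp [hardPGraph, hardLabel]) <|
      .cons (by simp [hardPGraph, hardLabel]) (.nil _)
  have hcorr : List.Forall₂ (corrEvent h) (s ++ [.inl 0, .inr (src j)])
      (s.map (Sum.map id d) ++ [.inl 0, .inr k]) :=
    List.rel_append (forall₂_corrEvent_map hd s) (.cons rfl (.cons hks .nil))
  have himage : (F.mapObs h).Trans (⟨0, hn⟩, HTag.ti)
      (s.map (Sum.map id d) ++ [.inl 0, .inr k] ++ [.inl 2]) (j, HTag.tot) := by
    simpa using (hs.mapObs hd).append <|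
      .cons (w := (j, .toi)) (inl_mem_mapObs_label.mpr (by simp [hardPGraph, hardLabel])) <|
      .cons (w := (j, .tt)) (inr_mem_mapObs_label (by simp [hardPGraph, hardLabel]) hkt) <|
      .cons (inl_mem_mapObs_label.mpr (by simp [hardPGraph, hardLabel])) (.nil _)
  have hemit₂ : s ++ [.inl 0, .inr (src j)] ++ [.inl 2] ∈ F.lang :=
    (Set.ext_iff.mp (hnd _ ⟨_, rfl, _, hsj⟩ ⟨src j, by simp⟩) 2).mpr
      ⟨_, hcorr, _, rfl, _, himage⟩
  obtain ⟨v, rfl, x, hx⟩ := hemit₂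
  obtain ⟨m, hm, hmx⟩ := trans_append hx
  obtain rfl := (hardPGraph_stateDetermined hn hst).reach_unique rfl rfl hm hsj
  have := trans_single hmx
  obtain ⟨k', b⟩ := x
  cases b <;> simp [F, hardPGraph, hardLabel] at this

end Construction

theorem three_colorable_iff_nondestructive_map_general
    {Vt : Type}
    (G : SimpleGraph Vt) (n : ℕ) (hn : 0 < n) (src tgt : Fin n → Vt)
    (hadj : ∀ j : Fin n, G.Adj (src j) (tgt j))
    (hsurj : ∀ a b : Vt, G.Adj a b →
      ∃ j : Fin n, (src j = a ∧ tgt j = b) ∨ (src j = b ∧ tgt j = a)) :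
    (∃ c : Vt → Fin 3, ∀ a b : Vt, G.Adj a b → c a ≠ c b) ↔
      ∃ (K : Type) (_ : Fintype K), Fintype.card K ≤ 3 ∧
        ∃ h : Vt → Set K, (∀ y : Vt, (h y).Nonempty) ∧
          ObsNonDestructive (hardPGraph n hn src tgt) h := by
  have hst : ∀ j, src j ≠ tgt j := fun j => (hadj j).ne
  constructor
  · rintro ⟨c, hc⟩
    refine ⟨Fin 3, inferInstance, by simp, fun y => {c y},
      fun y => Set.singleton_nonempty _, ?_⟩
    apply obsNonDestructive_singleton_of_stateDetermined
    rw [hardPGraph_mapObs_singleton]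
    exact hardPGraph_stateDetermined hn fun j => hc _ _ (hadj j)
  · rintro ⟨K, _, hcard, h, hne, hnd⟩
    obtain ⟨emb⟩ : Nonempty (K ↪ Fin 3) :=
      Function.Embedding.nonempty_of_card_le (by simpa using hcard)
    have hsep := disjoint_of_obsNonDestructive_hardPGraph hn hst hne hnd
    choose d hd using hne
    refine ⟨fun y => emb (d y), fun a b hab hcol => ?_⟩
    obtain ⟨j, ⟨rfl, rfl⟩ | ⟨rfl, rfl⟩⟩ := hsurj a b hab
    · exact (hsep j).ne_of_mem (hd _) (hd _) (emb.injective hcol)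
    · exact (hsep j).ne_of_mem (hd _) (hd _) (emb.injective hcol).symm

/-- the graph `G` (whose edges are listed as `{src j, tgt j}`,
`j = 1, …, n`) admits a proper 3-coloring if and only if there is a set `K` with
`|K| ≤ 3` and an observation map `h : V(G) → P(K) ∖ {∅}` that is non-destructive
on the p-graph `hardPGraph n hn src tgt` built from that listing. -/
theorem three_colorable_iff_nondestructive_map
    {Vt : Type} [Fintype Vt] [DecidableEq Vt]
    (G : SimpleGraph Vt) (n : ℕ) (hn : 0 < n) (src tgt : Fin n → Vt)
    (hadj : ∀ j : Fin n, G.Adj (src j) (tgt j))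
    (hsurj : ∀ a b : Vt, G.Adj a b →
      ∃ j : Fin n, (src j = a ∧ tgt j = b) ∨ (src j = b ∧ tgt j = a))
    (hinj : Function.Injective fun j : Fin n => s(src j, tgt j)) :
    (∃ c : Vt → Fin 3, ∀ a b : Vt, G.Adj a b → c a ≠ c b) ↔
      ∃ (K : Type) (_ : Fintype K), Fintype.card K ≤ 3 ∧
        ∃ h : Vt → Set K, (∀ y : Vt, (h y).Nonempty) ∧
          ObsNonDestructive (hardPGraph n hn src tgt) h :=
  three_colorable_iff_nondestructive_map_general G n hn src tgt hadj hsurj
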